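/- arXiv:0711.3686 — 3 statements merged into one kernel-verified Lean document; each statement's English description precedes it below -/
import Mathlib

section
/- Let (Z_n) be a Galton–Watson process with offspring distribution Q on the non-negative integers. Then for all integers k ≥ 0 and n ≥ 1, Q[Z_1 ≤ k | Z_n = 0] ≥ Q[Z_1 ≤ k], i.e. conditioned on extinction by generation n, the first generation size is stochastically dominated by the unconditioned first generation size. Consequently, E[Z_1 | Z_n = 0] ≤ E[Z_1]. -/
/-!
Conditioning on `{Z_n = 0}` reweights the law `q` of `Z_1` by `j ↦ v ^ j`, with
`v = Q[Z_{n-1} = 0] ∈ [0, 1]`. The weight is antitone in `j`, so by Chebyshev's sum inequality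
it is nonnegatively correlated with the antitone indicator of `{j ≤ k}` and nonpositively
correlated with the identity `j ↦ j`; dividing by the normalising constant `Q[Z_n = 0] > 0`
gives both claims.
-/

open Finset

section Chebyshev

variable {ι : Type*} {q f g : ι → ℝ} {a b c : ℝ}

/-- Chebyshev's sum inequality for a probability vector `q`: the double sum of the nonnegative
terms `q i * q j * (f j - f i) * (g j - g i)` equals `2 * (b - a * c)`. -/
theorem Monovary.mul_le_of_hasSum (hfg : Monovary f g) (hq : ∀ i, 0 ≤ q i) (hq1 : HasSum q 1)
    (ha : HasSum (fun i => q i * f i) a) (hc : HasSum (fun i => q i * g i) c)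
    (hb : HasSum (fun i => q i * (f i * g i)) b) : a * c ≤ b := by
  have hinner : ∀ i, HasSum (fun j => q i * (q j * ((f j - f i) * (g j - g i))))
      (q i * (b - f i * c - g i * a + f i * g i)) := by
    intro i
    have h := (((hb.sub (hc.mul_left (f i))).sub (ha.mul_left (g i))).add
      (hq1.mul_right (f i * g i))).congr_fun (g := fun j => q j * ((f j - f i) * (g j - g i)))
      fun j => by ring
    rw [one_mul] at h
    exact h.mul_left (q i)
  have houter : HasSum (fun i => ∑' j, q i * (q j * ((f j - f i) * (g j - g i))))
      (2 * (b - a * c)) := by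
    have h := (((hb.sub (ha.mul_right c)).sub (hc.mul_right a)).add (hq1.mul_left b)).congr_fun
      (g := fun i => ∑' j, q i * (q j * ((f j - f i) * (g j - g i))))
      fun i => by rw [(hinner i).tsum_eq]; ring
    rwa [show b - a * c - c * a + b * 1 = 2 * (b - a * c) by ring] at h
  have hnonneg : 0 ≤ 2 * (b - a * c) := houter.nonneg fun i =>
    tsum_nonneg fun j => mul_nonneg (hq i) (mul_nonneg (hq j) (hfg.sub_mul_sub_nonneg i j))
  linarith

theorem Antivary.le_mul_of_hasSum (hfg : Antivary f g) (hq : ∀ i, 0 ≤ q i) (hq1 : HasSum q 1)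
    (ha : HasSum (fun i => q i * f i) a) (hc : HasSum (fun i => q i * g i) c)
    (hb : HasSum (fun i => q i * (f i * g i)) b) : b ≤ a * c := by
  have h := hfg.neg_left.mul_le_of_hasSum hq hq1 (f := -f) (a := -a) (b := -b)
    (by simpa using ha.neg) hc (by simpa using hb.neg)
  linarith

end Chebyshev

section GeneratingFunction

variable {q : ℕ → ℝ} {v : ℝ}

theorem summable_mul_pow_of_mem_Icc (hq : ∀ j, 0 ≤ q j) (hsq : Summable q)
    (hv : v ∈ Set.Icc 0 1) :
    Summable fun j => q j * v ^ j :=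
  hsq.of_nonneg_of_le (fun j => mul_nonneg (hq j) (pow_nonneg hv.1 j))
    fun j => mul_le_of_le_one_right (hq j) (pow_le_one₀ hv.1 hv.2)

theorem tsum_mul_pow_mem_Icc (hq : ∀ j, 0 ≤ q j) (hq1 : HasSum q 1) (hv : v ∈ Set.Icc 0 1) :
    ∑' j, q j * v ^ j ∈ Set.Icc 0 1 :=
  ⟨tsum_nonneg fun j => mul_nonneg (hq j) (pow_nonneg hv.1 j),
    hq1.tsum_eq ▸ (summable_mul_pow_of_mem_Icc hq hq1.summable hv).tsum_le_tsum
      (fun j => mul_le_of_le_one_right (hq j) (pow_le_one₀ hv.1 hv.2)) hq1.summable⟩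

theorem tsum_mul_pow_pos (hq : ∀ j, 0 ≤ q j) (hsq : Summable q) (hq0 : 0 < q 0)
    (hv : v ∈ Set.Icc 0 1) : 0 < ∑' j, q j * v ^ j := by
  refine lt_of_lt_of_le ?_ ((summable_mul_pow_of_mem_Icc hq hsq hv).le_tsum 0
    fun j _ => mul_nonneg (hq j) (pow_nonneg hv.1 j))
  simpa using hq0

theorem hasSum_mul_ite_lt (p : ℕ → ℝ) (k : ℕ) :
    HasSum (fun j => p j * if j < k then 1 else 0) (∑ j ∈ range k, p j) := by
  have h : HasSum (fun j => p j * if j < k then 1 else 0)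
      (∑ j ∈ range k, p j * if j < k then 1 else 0) :=
    hasSum_sum_of_ne_finset_zero fun j hj => by simp_all
  rwa [sum_congr rfl fun j hj =>
    show (p j * if j < k then 1 else 0) = p j by simp [mem_range.mp hj]] at h

theorem sum_range_mul_tsum_mul_pow_le (hq : ∀ j, 0 ≤ q j) (hq1 : HasSum q 1)
    (hv : v ∈ Set.Icc 0 1) (k : ℕ) :
    (∑ j ∈ range k, q j) * ∑' j, q j * v ^ j ≤ ∑ j ∈ range k, q j * v ^ j := by
  have hlow : Antitone fun j : ℕ => if j < k then (1 : ℝ) else 0 := by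
    intro i j hij
    dsimp only
    split_ifs <;> first | omega | norm_num
  refine (hlow.monovary (pow_right_anti₀ hv.1 hv.2)).mul_le_of_hasSum hq hq1
    (hasSum_mul_ite_lt q k) (summable_mul_pow_of_mem_Icc hq hq1.summable hv).hasSum ?_
  convert hasSum_mul_ite_lt (fun j => q j * v ^ j) k using 2
  ring

theorem tsum_natCast_mul_mul_pow_le (hq : ∀ j, 0 ≤ q j) (hq1 : HasSum q 1)
    (hmean : Summable fun j : ℕ => (j : ℝ) * q j) (hv : v ∈ Set.Icc 0 1) :
    ∑' j : ℕ, (j : ℝ) * q j * v ^ j ≤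
      (∑' j : ℕ, (j : ℝ) * q j) * ∑' j, q j * v ^ j := by
  have hb : Summable fun j : ℕ => (j : ℝ) * q j * v ^ j :=
    hmean.of_nonneg_of_le
      (fun j => mul_nonneg (mul_nonneg j.cast_nonneg (hq j)) (pow_nonneg hv.1 j))
      fun j => mul_le_of_le_one_right (mul_nonneg j.cast_nonneg (hq j))
        (pow_le_one₀ hv.1 hv.2)
  refine (Nat.mono_cast.antivary (pow_right_anti₀ hv.1 hv.2)).le_mul_of_hasSum hq hq1 ?_
    (summable_mul_pow_of_mem_Icc hq hq1.summable hv).hasSum ?_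
  · simpa only [mul_comm] using hmean.hasSum
  · convert hb.hasSum using 2
    ring

end GeneratingFunction

/-- For a Galton–Watson process with offspring law `(q_j)` (extinction
probabilities `u n = Q[Z_n = 0]` satisfying `u 0 = 0`, `u (n+1) = ∑_j q_j (u n)^j`, and
joint law `Q[Z_1 = j, Z_n = 0] = q_j u(n-1)^j`), for all `k ≥ 0` and `n ≥ 1`,
`Q[Z_1 ≤ k | Z_n = 0] ≥ Q[Z_1 ≤ k]`; consequently `E[Z_1 | Z_n = 0] ≤ E[Z_1]`. -/
theorem gw_first_generation_conditioned_on_extinction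
    (q : ℕ → ℝ) (hq : ∀ j, 0 ≤ q j) (hsum : ∑' j, q j = 1) (hq0 : 0 < q 0)
    (hmean : Summable (fun j : ℕ => (j : ℝ) * q j))
    (u : ℕ → ℝ) (hu0 : u 0 = 0)
    (hurec : ∀ n, u (n + 1) = ∑' j, q j * u n ^ j) :
    (∀ k : ℕ, ∀ n : ℕ, 1 ≤ n →
      (∑ j ∈ Finset.range (k + 1), q j * u (n - 1) ^ j) / u n
        ≥ ∑ j ∈ Finset.range (k + 1), q j) ∧
    (∀ n : ℕ, 1 ≤ n →
      (∑' j : ℕ, (j : ℝ) * q j * u (n - 1) ^ j) / u n ≤ ∑' j : ℕ, (j : ℝ) * q j) := by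
  have hq1 : HasSum q 1 := hsum ▸ Summable.hasSum (by
    by_contra h
    simp [tsum_eq_zero_of_not_summable h] at hsum)
  have hu : ∀ n, u n ∈ Set.Icc 0 1 := by
    intro n
    induction n with
    | zero => simp [hu0]
    | succ m ih => exact hurec m ▸ tsum_mul_pow_mem_Icc hq hq1 ih
  have hun : ∀ n, 1 ≤ n → u n = ∑' j, q j * u (n - 1) ^ j := by
    intro n hn
    obtain ⟨m, rfl⟩ := Nat.exists_eq_add_of_le' hn
    simpa using hurec m
  have hpos : ∀ n, 1 ≤ n → 0 < u n := fun n hn =>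
    hun n hn ▸ tsum_mul_pow_pos hq hq1.summable hq0 (hu (n - 1))
  refine ⟨fun k n hn => ?_, fun n hn => ?_⟩
  · rw [ge_iff_le, le_div_iff₀ (hpos n hn), hun n hn]
    exact sum_range_mul_tsum_mul_pow_le hq hq1 (hu (n - 1)) (k + 1)
  · rw [div_le_iff₀ (hpos n hn), hun n hn]
    exact tsum_natCast_mul_mul_pow_le hq hq1 hmean (hu (n - 1))
end

section
/- Let (Z_n) be a subcritical Galton–Watson process with offspring law Q, mean m = E_Q[Z_1] < 1, satisfying E_Q[Z_1 log^+ Z_1] < ∞. Then there exists α > 0 such that Q[H ≥ n] ∼ α m^n as n → ∞, where H = max{n ≥ 0 : Z_n > 0}. Moreover, for all n ≥ 0, Q[H ≥ n] ≤ m^n. -/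
/-!
With `f s = ∑ q_j s^j` and `b n = 1 - u n = Q[H ≥ n]` we have `b (n + 1) = 1 - f (1 - b n)`.
Termwise Bernoulli gives `0 ≤ m b - (1 - f (1 - b)) ≤ b ∑ q_j j min(1, j b)`. The lower bound
yields `b n ≤ mⁿ` and makes `b n / mⁿ` nonincreasing; the upper bound, combined with `b n ≤ mⁿ`,
bounds the relative decrements of `b n / mⁿ` by `T n / m`, where `T n = ∑ q_j j min(1, j mⁿ)`.
Since `∑ₙ min(1, j mⁿ) = O(log j)`, the `L log L` condition makes `T` summable, and a positive
nonincreasing sequence with summable relative decrements has a positive limit.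
-/

open Filter Topology

noncomputable def pgf (q : ℕ → ℝ) (s : ℝ) : ℝ := ∑' j, q j * s ^ j

theorem one_sub_pow_le_mul_one_sub {s : ℝ} (hs : -1 ≤ s) (j : ℕ) :
    1 - s ^ j ≤ j * (1 - s) := by
  have h := one_add_mul_le_pow (a := s - 1) (by linarith) j
  rw [add_sub_cancel] at h
  linarith

theorem mul_one_sub_sub_one_sub_pow_le_sq {s : ℝ} (hs0 : -1 ≤ s) (hs1 : s ≤ 1) (j : ℕ) :
    j * (1 - s) - (1 - s ^ j) ≤ (j * (1 - s)) ^ 2 := by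
  induction j with
  | zero => simp
  | succ j ih =>
    have h := mul_le_mul_of_nonneg_left (one_sub_pow_le_mul_one_sub hs0 j) (sub_nonneg.2 hs1)
    push_cast
    rw [pow_succ]
    nlinarith [mul_nonneg (j.cast_nonneg : (0 : ℝ) ≤ j) (sq_nonneg (1 - s))]

theorem mul_one_sub_sub_one_sub_pow_le {s t : ℝ} (hs0 : 0 ≤ s) (hs1 : s ≤ 1) (hst : 1 - s ≤ t)
    (j : ℕ) : j * (1 - s) - (1 - s ^ j) ≤ (1 - s) * (j * min 1 (j * t)) := by
  have hb : 0 ≤ (j : ℝ) * (1 - s) := by have := sub_nonneg.2 hs1; positivity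
  have hfirst : j * (1 - s) - (1 - s ^ j) ≤ j * (1 - s) := by
    linarith [pow_le_one₀ hs0 hs1 (n := j)]
  have hsecond : j * (1 - s) - (1 - s ^ j) ≤ j * (1 - s) * (j * t) :=
    (mul_one_sub_sub_one_sub_pow_le_sq (by linarith) hs1 j).trans <| by
      rw [sq]; gcongr
  calc j * (1 - s) - (1 - s ^ j) ≤ min (j * (1 - s) * 1) (j * (1 - s) * (j * t)) :=
        le_min (hfirst.trans_eq (mul_one _).symm) hsecond
    _ = (1 - s) * (j * min 1 (j * t)) := by rw [← mul_min_of_nonneg _ _ hb]; ring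

section pgf

variable {q : ℕ → ℝ} {m s : ℝ}

theorem pgf_nonneg (hq : ∀ j, 0 ≤ q j) (hs : 0 ≤ s) : 0 ≤ pgf q s :=
  tsum_nonneg fun j => mul_nonneg (hq j) (pow_nonneg hs j)

theorem summable_mul_pow (hq : ∀ j, 0 ≤ q j) (hqs : Summable q) (hs0 : 0 ≤ s)
    (hs1 : s ≤ 1) : Summable fun j => q j * s ^ j :=
  hqs.of_nonneg_of_le (fun j => mul_nonneg (hq j) (pow_nonneg hs0 j))
    fun j => mul_le_of_le_one_right (hq j) (pow_le_one₀ hs0 hs1)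

theorem pgf_lt_one (hq : ∀ j, 0 ≤ q j) (hq1 : HasSum q 1) {k : ℕ} (hk : k ≠ 0) (hqk : 0 < q k)
    (hs0 : 0 ≤ s) (hs1 : s < 1) : pgf q s < 1 :=
  hasSum_lt (f := fun j => q j * s ^ j) (i := k)
    (fun j => mul_le_of_le_one_right (hq j) (pow_le_one₀ hs0 hs1.le))
    (mul_lt_of_lt_one_right hqk (pow_lt_one₀ hs0 hs1 hk))
    (summable_mul_pow hq hq1.summable hs0 hs1.le).hasSum hq1

theorem hasSum_mul_one_sub_sub_one_sub_pgf (hq : ∀ j, 0 ≤ q j) (hq1 : HasSum q 1)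
    (hm : HasSum (fun j : ℕ => (j : ℝ) * q j) m) (hs0 : 0 ≤ s) (hs1 : s ≤ 1) :
    HasSum (fun j : ℕ => q j * (j * (1 - s) - (1 - s ^ j))) (m * (1 - s) - (1 - pgf q s)) := by
  have hpgf := (summable_mul_pow hq hq1.summable hs0 hs1).hasSum
  exact ((hm.mul_right (1 - s)).sub (hq1.sub hpgf)).congr_fun fun j => by ring

theorem one_sub_pgf_le_mul (hq : ∀ j, 0 ≤ q j) (hq1 : HasSum q 1)
    (hm : HasSum (fun j : ℕ => (j : ℝ) * q j) m) (hs0 : 0 ≤ s) (hs1 : s ≤ 1) :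
    1 - pgf q s ≤ m * (1 - s) :=
  sub_nonneg.1 <| (hasSum_mul_one_sub_sub_one_sub_pgf hq hq1 hm hs0 hs1).nonneg fun j =>
    mul_nonneg (hq j) (sub_nonneg.2 (one_sub_pow_le_mul_one_sub (by linarith) j))

theorem mul_one_sub_sub_one_sub_pgf_le (hq : ∀ j, 0 ≤ q j) (hq1 : HasSum q 1)
    (hm : HasSum (fun j : ℕ => (j : ℝ) * q j) m) (hs0 : 0 ≤ s) (hs1 : s ≤ 1) {t : ℝ}
    (hst : 1 - s ≤ t) :
    m * (1 - s) - (1 - pgf q s) ≤ (1 - s) * ∑' j, q j * j * min 1 (j * t) := by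
  have ht : 0 ≤ t := by linarith
  have hsummable : Summable fun j : ℕ => q j * j * min 1 (j * t) :=
    hm.summable.of_nonneg_of_le
      (fun j => mul_nonneg (mul_nonneg (hq j) j.cast_nonneg)
        (le_min zero_le_one (mul_nonneg j.cast_nonneg ht)))
      fun j => (mul_le_of_le_one_right (mul_nonneg (hq j) j.cast_nonneg)
        (min_le_left _ _)).trans_eq (mul_comm _ _)
  refine hasSum_le (fun j => ?_) (hasSum_mul_one_sub_sub_one_sub_pgf hq hq1 hm hs0 hs1)
    (hsummable.hasSum.mul_left (1 - s))
  calc q j * (j * (1 - s) - (1 - s ^ j)) ≤ q j * ((1 - s) * (j * min 1 (j * t))) :=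
        mul_le_mul_of_nonneg_left (mul_one_sub_sub_one_sub_pow_le hs0 hs1 hst j) (hq j)
    _ = (1 - s) * (q j * j * min 1 (j * t)) := by ring

end pgf

section series

variable {ρ : ℝ}

theorem tsum_min_one_mul_pow_le (hρ0 : 0 < ρ) (hρ1 : ρ < 1) {x : ℝ} (hx : 1 ≤ x) :
    ∑' n : ℕ, min 1 (x * ρ ^ n) ≤ Real.log x / Real.log ρ⁻¹ + 1 + (1 - ρ)⁻¹ := by
  have hlog : 0 < Real.log ρ⁻¹ := Real.log_pos (one_lt_inv₀ hρ0 |>.2 hρ1)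
  have hgeom : Summable fun n : ℕ => ρ ^ n := summable_geometric_of_lt_one hρ0.le hρ1
  have hsummable : Summable fun n : ℕ => min 1 (x * ρ ^ n) :=
    (hgeom.mul_left x).of_nonneg_of_le (fun n => le_min zero_le_one (by positivity))
      fun n => min_le_right _ _
  -- after `N` steps the geometric term has dropped below `1`
  set N := ⌈Real.log x / Real.log ρ⁻¹⌉₊
  have hN : (N : ℝ) < Real.log x / Real.log ρ⁻¹ + 1 :=
    Nat.ceil_lt_add_one (div_nonneg (Real.log_nonneg hx) hlog.le)
  have hxN : x * ρ ^ N ≤ 1 := by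
    have : x ≤ ρ⁻¹ ^ N :=
      Real.le_pow_of_log_le (inv_pos.2 hρ0) ((div_le_iff₀ hlog).1 (Nat.le_ceil _))
    rwa [inv_pow, ← one_div, le_div_iff₀ (pow_pos hρ0 N)] at this
  have hhead : ∑ n ∈ Finset.range N, min 1 (x * ρ ^ n) ≤ N := by
    simpa using Finset.sum_le_sum fun n (_ : n ∈ Finset.range N) => min_le_left 1 (x * ρ ^ n)
  have htail : ∑' n : ℕ, min 1 (x * ρ ^ (n + N)) ≤ (1 - ρ)⁻¹ := by
    rw [← tsum_geometric_of_lt_one hρ0.le hρ1]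
    refine ((summable_nat_add_iff N).2 hsummable).tsum_le_tsum (fun n => ?_) hgeom
    calc min 1 (x * ρ ^ (n + N)) ≤ x * ρ ^ N * ρ ^ n := by
          rw [pow_add, mul_comm (ρ ^ n), ← mul_assoc]; exact min_le_right _ _
      _ ≤ ρ ^ n := mul_le_of_le_one_left (pow_nonneg hρ0.le n) hxN
  rw [← hsummable.sum_add_tsum_nat_add N]
  linarith

theorem summable_tsum_mul_min_one_mul_pow {q : ℕ → ℝ} (hq : ∀ j, 0 ≤ q j)
    (hmean : Summable fun j : ℕ => (j : ℝ) * q j)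
    (hLlogL : Summable fun j : ℕ => (j : ℝ) * Real.log j * q j) (hρ0 : 0 < ρ) (hρ1 : ρ < 1) :
    Summable fun n : ℕ => ∑' j : ℕ, q j * j * min 1 (j * ρ ^ n) := by
  have hnonneg : ∀ j n : ℕ, 0 ≤ q j * j * min 1 (j * ρ ^ n) := fun j n => by
    have := hq j; have : 0 ≤ min 1 ((j : ℝ) * ρ ^ n) := le_min zero_le_one (by positivity)
    positivity
  have hrow : ∀ j : ℕ, Summable fun n : ℕ => q j * j * min 1 (j * ρ ^ n) := fun j =>
    ((summable_geometric_of_lt_one hρ0.le hρ1).mul_left (q j * j * j)).of_nonneg_of_le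
      (hnonneg j) fun n => by
        rw [mul_assoc _ (j : ℝ) (ρ ^ n)]
        exact mul_le_mul_of_nonneg_left (min_le_right _ _) (by have := hq j; positivity)
  have hrowsum : Summable fun j : ℕ => ∑' n : ℕ, q j * j * min 1 (j * ρ ^ n) := by
    have hbound := (hLlogL.mul_left (Real.log ρ⁻¹)⁻¹).add (hmean.mul_left (1 + (1 - ρ)⁻¹))
    refine hbound.of_nonneg_of_le (fun j => tsum_nonneg (hnonneg j)) fun j => ?_
    rw [tsum_mul_left]
    rcases Nat.eq_zero_or_pos j with rfl | hj
    · simp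
    calc q j * j * ∑' n : ℕ, min 1 (j * ρ ^ n)
        ≤ q j * j * (Real.log j / Real.log ρ⁻¹ + 1 + (1 - ρ)⁻¹) :=
          mul_le_mul_of_nonneg_left (tsum_min_one_mul_pow_le hρ0 hρ1 (by exact_mod_cast hj))
            (by have := hq j; positivity)
      _ = _ := by ring
  exact (summable_prod_of_nonneg (f := fun p : ℕ × ℕ => q p.1 * p.1 * min 1 (p.1 * ρ ^ p.2))
    fun p => hnonneg p.1 p.2).2 ⟨hrow, hrowsum⟩ |>.prod_symm.prod

end series

theorem exists_pos_tendsto_of_sub_le_mul {r c : ℕ → ℝ} (hr : ∀ n, 0 < r n) (hanti : Antitone r)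
    (hc : Summable c) (hstep : ∀ n, r n - r (n + 1) ≤ r n * c n) :
    ∃ α, 0 < α ∧ Tendsto r atTop (𝓝 α) := by
  have hc0 : ∀ n, 0 ≤ c n := fun n =>
    nonneg_of_mul_nonneg_right ((sub_nonneg.2 (hanti n.le_succ)).trans (hstep n)) (hr n)
  obtain ⟨K, hK⟩ : ∃ K, ∑' k, c (k + K) < 1 / 2 :=
    ((tendsto_sum_nat_add c).eventually_lt_const one_half_pos).exists
  have hsmall : ∀ n, ∑ k ∈ Finset.Ico K n, c k ≤ 1 / 2 := fun n => by
    rw [Finset.sum_Ico_eq_sum_range]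
    simp_rw [add_comm K]
    exact (((summable_nat_add_iff K).2 hc).sum_le_tsum _ fun k _ => hc0 _).trans hK.le
  -- beyond `K`, each decrement is at most `r K * c k`, and these add up to at most `r K / 2`
  have hlow : ∀ n, K ≤ n → r K * (1 - ∑ k ∈ Finset.Ico K n, c k) ≤ r n := by
    intro n hn
    induction n, hn using Nat.le_induction with
    | base => simp
    | succ n hn ih =>
      rw [Finset.sum_Ico_succ_top hn]
      nlinarith [hstep n, hanti hn, hc0 n]
  refine ⟨⨅ n, r n, lt_of_lt_of_le (half_pos (hr K)) (le_ciInf fun n => ?_),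
    tendsto_atTop_ciInf hanti ⟨0, by rintro _ ⟨n, rfl⟩; exact (hr n).le⟩⟩
  rcases le_total K n with hn | hn
  · nlinarith [hlow n hn, hsmall n, hr K]
  · linarith [hanti hn, hr K]

theorem exists_pos_tendsto_div_pow {b T : ℕ → ℝ} {m : ℝ} (hm : 0 < m) (hb : ∀ n, 0 < b n)
    (hT : Summable T) (hle : ∀ n, b (n + 1) ≤ m * b n)
    (hdefect : ∀ n, m * b n - b (n + 1) ≤ b n * T n) :
    ∃ α, 0 < α ∧ Tendsto (fun n => b n / m ^ n) atTop (𝓝 α) := by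
  have hdiff : ∀ n, b n / m ^ n - b (n + 1) / m ^ (n + 1) =
      (m * b n - b (n + 1)) / m ^ (n + 1) := fun n => by field_simp; ring
  refine exists_pos_tendsto_of_sub_le_mul (c := fun n => T n / m)
    (fun n => div_pos (hb n) (pow_pos hm n)) (antitone_nat_of_succ_le fun n => ?_)
    (hT.div_const m) fun n => ?_
  · rw [← sub_nonneg, hdiff]
    exact div_nonneg (sub_nonneg.2 (hle n)) (by positivity)
  · rw [hdiff, div_le_iff₀ (by positivity)]
    calc m * b n - b (n + 1) ≤ b n * T n := hdefect n
      _ = b n / m ^ n * (T n / m) * m ^ (n + 1) := by field_simp; ring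

/-- For a subcritical Galton–Watson process with offspring law `(q_j)`,
mean `m < 1`, and `E[Z_1 log⁺ Z_1] < ∞` (extinction probabilities `u n = Q[Z_n = 0]`
satisfying the generating-function recursion), there exists `α > 0` with
`Q[H ≥ n] = 1 - u n ∼ α mⁿ`; moreover `1 - u n ≤ mⁿ` for all `n`. -/
theorem gw_height_tail_asymptotics
    (q : ℕ → ℝ) (hq : ∀ j, 0 ≤ q j) (hsum : ∑' j, q j = 1)
    (hmean : Summable (fun j : ℕ => (j : ℝ) * q j))
    (m : ℝ) (hm : m = ∑' j : ℕ, (j : ℝ) * q j) (hm0 : 0 < m) (hm1 : m < 1)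
    (hLlogL : Summable (fun j : ℕ => (j : ℝ) * Real.log j * q j))
    (u : ℕ → ℝ) (hu0 : u 0 = 0)
    (hurec : ∀ n, u (n + 1) = ∑' j, q j * u n ^ j) :
    (∃ α : ℝ, 0 < α ∧
      Tendsto (fun n : ℕ => (1 - u n) / m ^ n) atTop (nhds α)) ∧
    (∀ n : ℕ, 1 - u n ≤ m ^ n) := by
  have hq1 : HasSum q 1 := by
    refine hsum ▸ (Summable.hasSum ?_)
    by_contra h
    exact zero_ne_one (tsum_eq_zero_of_not_summable h ▸ hsum)
  have hmq : HasSum (fun j : ℕ => (j : ℝ) * q j) m := hm ▸ hmean.hasSum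
  obtain ⟨k, hk, hqk⟩ : ∃ k, k ≠ 0 ∧ 0 < q k := by
    by_contra! h
    refine hm0.ne' (hmq.unique (hasSum_zero.congr_fun fun j => ?_))
    rcases eq_or_ne j 0 with rfl | hj
    · simp
    · simp [le_antisymm (h j hj) (hq j)]
  have hu : ∀ n, 0 ≤ u n ∧ u n < 1 := fun n => by
    induction n with
    | zero => simp [hu0]
    | succ n ih =>
      rw [hurec]
      exact ⟨pgf_nonneg hq ih.1, pgf_lt_one hq hq1 hk hqk ih.1 ih.2⟩
  have hstep : ∀ n, 1 - u (n + 1) ≤ m * (1 - u n) := fun n => by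
    rw [hurec]; exact one_sub_pgf_le_mul hq hq1 hmq (hu n).1 (hu n).2.le
  have hpow : ∀ n, 1 - u n ≤ m ^ n := fun n => by
    induction n with
    | zero => simp [hu0]
    | succ n ih => exact (hstep n).trans (by rw [pow_succ']; gcongr)
  refine ⟨exists_pos_tendsto_div_pow hm0 (fun n => sub_pos.2 (hu n).2)
    (summable_tsum_mul_min_one_mul_pow hq hmean hLlogL hm0 hm1) hstep fun n => ?_, hpow⟩
  rw [hurec]
  exact mul_one_sub_sub_one_sub_pgf_le hq hq1 hmq (hu n).1 (hu n).2.le (hpow n)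
end

section
/- Let f be the generating function of a supercritical offspring distribution with mean m = f'(1) ∈ (1, ∞), extinction probability q ∈ (0,1) (the fixed point f(q) = q), and let η_n ∈ (0,1) satisfy η_n ∼ α f'(q)^{h_n} with h_n → ∞. Then P[K_0 ≥ h_n] = 1 − (f((1−η_n)q + 1 − q) − f((1−η_n)q)) / (1−q) ∼ C_a f'(q)^{h_n} as n → ∞, where C_a = α q (m − f'(q))/(1−q). -/
/-!
Write `f` for the generating function. Since `f 1 = 1` and `f q = q`, the quantity in question is
`((f 1 - f (1 - qη)) - (f q - f (q - qη))) / (1 - q)`, and differentiating `f` (termwise, by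
dominated convergence, also at the boundary point `1`) gives
`q (f'(1) - f'(q)) η / (1 - q) + o(η)`. The constant is nonzero because a supercritical `f` is
strictly convex, so `f'(q) < 1 < m`; the same inequality makes `f'(q)^{h_n}`, hence `η_n`, tend to
`0`, which justifies the expansion.
-/

open Filter Topology Asymptotics Set Finset

noncomputable def genFun (p : ℕ → ℝ) (s : ℝ) : ℝ := ∑' k, p k * s ^ k

/-- `P[K₀ ≥ h]` when each of the `Z - Z*` children without infinite line of descent is,
independently with probability `t`, a trap of height `≥ h`: by
`E[s^(Z-Z*) u^Z*] = f (s q + u (1 - q))`, the event "no trap and `Z* ≥ 1`" has probability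
`f ((1 - t) q + 1 - q) - f ((1 - t) q)`. -/
noncomputable def trapProb (f : ℝ → ℝ) (q t : ℝ) : ℝ :=
  1 - (f ((1 - t) * q + (1 - q)) - f ((1 - t) * q)) / (1 - q)

theorem summable_of_summable_natCast_mul {p : ℕ → ℝ} (h : Summable fun k : ℕ => (k : ℝ) * p k) :
    Summable p := by
  refine (summable_nat_add_iff 1).mp <|
    (h.comp_injective (add_left_injective 1)).norm.of_norm_bounded fun k => ?_
  simp only [Function.comp_apply, Nat.cast_add, Nat.cast_one, norm_mul]
  exact le_mul_of_one_le_left (norm_nonneg _) (by rw [Real.norm_eq_abs]; norm_cast; omega)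

theorem abs_slope_pow_le {x y : ℝ} (hx : |x| ≤ 1) (hy : |y| ≤ 1) (k : ℕ) :
    |slope (· ^ k) x y| ≤ k := by
  rcases eq_or_ne y x with rfl | hyx
  · simp
  rw [slope_def_field, abs_div, div_le_iff₀ (abs_pos.2 (sub_ne_zero.2 hyx))]
  calc |y ^ k - x ^ k| ≤ |y - x| * k * max |y| |x| ^ (k - 1) := abs_pow_sub_pow_le y x k
    _ ≤ |y - x| * k * 1 := by gcongr; exact pow_le_one₀ (by positivity) (max_le hy hx)
    _ = k * |y - x| := by ring

theorem hasDerivWithinAt_genFun {p : ℕ → ℝ} (hp : Summable fun k : ℕ => (k : ℝ) * p k) {x : ℝ}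
    (hx : x ∈ Icc (-1 : ℝ) 1) :
    HasDerivWithinAt (genFun p) (∑' k : ℕ, (k : ℝ) * p k * x ^ (k - 1)) (Icc (-1) 1) x := by
  have hsum_at : ∀ y ∈ Icc (-1 : ℝ) 1, Summable fun k => p k * y ^ k := fun y hy =>
    (summable_of_summable_natCast_mul hp).norm.of_norm_bounded fun k => by
      rw [norm_mul, norm_pow]
      exact mul_le_of_le_one_right (norm_nonneg _) (pow_le_one₀ (norm_nonneg _) (abs_le.2 hy))
  rw [hasDerivWithinAt_iff_tendsto_slope]
  have hslope : ∀ y ∈ Icc (-1 : ℝ) 1, slope (genFun p) x y = ∑' k, p k * slope (· ^ k) x y := by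
    intro y hy
    simp only [slope_def_field, genFun, mul_div_assoc', mul_sub]
    rw [← (hsum_at y hy).tsum_sub (hsum_at x hx), tsum_div_const]
  refine (tendsto_tsum_of_dominated_convergence (f := fun y k => p k * slope (· ^ k) x y)
    (bound := fun k : ℕ => ‖(k : ℝ) * p k‖) hp.norm (fun k => ?_) ?_).congr' ?_
  · have hk := (hasDerivAt_pow k x).tendsto_slope.mono_left
      (nhdsWithin_mono _ (sdiff_subset_compl (Icc (-1) 1) {x}))
    simpa [mul_comm, mul_assoc] using hk.const_mul (p k)
  · filter_upwards [self_mem_nhdsWithin] with y ⟨hy, _⟩ k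
    rw [norm_mul, norm_mul, mul_comm, Real.norm_eq_abs, Real.norm_natCast]
    gcongr
    exact abs_slope_pow_le (abs_le.2 hx) (abs_le.2 hy) k
  · filter_upwards [self_mem_nhdsWithin] with y ⟨hy, _⟩
    exact (hslope y hy).symm

theorem natCast_mul_pow_pred_mul_one_sub_le {q : ℝ} (h0 : 0 ≤ q) (h1 : q ≤ 1) (k : ℕ) :
    k * q ^ (k - 1) * (1 - q) ≤ 1 - q ^ k := by
  rw [← geom_sum_mul_neg]
  refine mul_le_mul_of_nonneg_right ?_ (sub_nonneg.2 h1)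
  calc (k : ℝ) * q ^ (k - 1) = ∑ _i ∈ range k, q ^ (k - 1) := by simp
    _ ≤ ∑ i ∈ range k, q ^ i :=
      sum_le_sum fun i hi => pow_le_pow_of_le_one h0 h1 (by grind)

theorem natCast_mul_pow_pred_mul_one_sub_lt {q : ℝ} (h0 : 0 ≤ q) (h1 : q < 1) {k : ℕ}
    (hk : 2 ≤ k) : k * q ^ (k - 1) * (1 - q) < 1 - q ^ k := by
  rw [← geom_sum_mul_neg]
  refine mul_lt_mul_of_pos_right ?_ (sub_pos.2 h1)
  calc (k : ℝ) * q ^ (k - 1) = ∑ _i ∈ range k, q ^ (k - 1) := by simp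
    _ < ∑ i ∈ range k, q ^ i :=
      sum_lt_sum (fun i hi => pow_le_pow_of_le_one h0 h1.le (by grind))
        ⟨0, Finset.mem_range.2 (by omega), by simpa using pow_lt_one₀ h0 h1 (by omega : k - 1 ≠ 0)⟩

theorem exists_two_le_pos_of_one_lt_mean {p : ℕ → ℝ} (hp : ∀ k, 0 ≤ p k) (hsum : ∑' k, p k = 1)
    (hmean : Summable fun k : ℕ => (k : ℝ) * p k) (hm1 : 1 < ∑' k : ℕ, (k : ℝ) * p k) :
    ∃ k, 2 ≤ k ∧ 0 < p k := by
  have hpos : 0 < ∑' k : ℕ, ((k : ℝ) - 1) * p k := by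
    simp only [sub_mul, one_mul]
    rw [hmean.tsum_sub (summable_of_summable_natCast_mul hmean), hsum]
    linarith
  obtain ⟨k, hk⟩ : ∃ k : ℕ, 0 < ((k : ℝ) - 1) * p k := by
    by_contra! h
    exact hpos.not_ge (tsum_nonpos h)
  have hk1 : 0 < (k : ℝ) - 1 := pos_of_mul_pos_left hk (hp k)
  exact ⟨k, by exact_mod_cast (by linarith : (1 : ℝ) < k), pos_of_mul_pos_right hk hk1.le⟩

/-- The chord of `f` from `(q, q)` to `(1, 1)` has slope `1`, and strict convexity of `f` (some
`p k > 0` with `k ≥ 2`) puts `f'(q)` strictly below it. -/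
theorem tsum_natCast_mul_mul_pow_pred_lt_one {p : ℕ → ℝ} (hp : ∀ k, 0 ≤ p k)
    (hsum : ∑' k, p k = 1) (hmean : Summable fun k : ℕ => (k : ℝ) * p k)
    (hm1 : 1 < ∑' k : ℕ, (k : ℝ) * p k) {q : ℝ} (hq0 : 0 ≤ q) (hq1 : q < 1)
    (hfix : genFun p q = q) : ∑' k : ℕ, (k : ℝ) * p k * q ^ (k - 1) < 1 := by
  obtain ⟨k₀, hk₀, hpk₀⟩ := exists_two_le_pos_of_one_lt_mean hp hsum hmean hm1
  have hsump := summable_of_summable_natCast_mul hmean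
  have hsumq : Summable fun k => p k * q ^ k :=
    hsump.of_nonneg_of_le (fun k => mul_nonneg (hp k) (pow_nonneg hq0 k))
      fun k => mul_le_of_le_one_right (hp k) (pow_le_one₀ hq0 hq1.le)
  have hchord : ∑' k, p k * (1 - q ^ k) = 1 - q := by
    simp only [mul_sub, mul_one]
    rw [hsump.tsum_sub hsumq, hsum, ← genFun, hfix]
  refine lt_of_mul_lt_mul_right ?_ (sub_nonneg.2 hq1.le)
  calc (∑' k : ℕ, (k : ℝ) * p k * q ^ (k - 1)) * (1 - q)
      = ∑' k : ℕ, p k * (k * q ^ (k - 1) * (1 - q)) := by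
        rw [← tsum_mul_right]; congr 1; ext k; ring
    _ < ∑' k, p k * (1 - q ^ k) := by
        refine Summable.tsum_lt_tsum_of_nonneg (i := k₀)
          (fun k => mul_nonneg (hp k) (by have := sub_nonneg.2 hq1.le; positivity))
          (fun k => mul_le_mul_of_nonneg_left
            (natCast_mul_pow_pred_mul_one_sub_le hq0 hq1.le k) (hp k))
          (mul_lt_mul_of_pos_left (natCast_mul_pow_pred_mul_one_sub_lt hq0 hq1 hk₀) hpk₀) ?_
        simp only [mul_sub, mul_one]
        exact hsump.sub hsumq
    _ = 1 * (1 - q) := by rw [hchord, one_mul]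

theorem HasDerivWithinAt.sub_comp_sub_mul_isLittleO {f : ℝ → ℝ} {f' x c : ℝ} {s : Set ℝ}
    (hf : HasDerivWithinAt f f' s x) {ι : Type*} {l : Filter ι} {η : ι → ℝ}
    (hη : Tendsto η l (𝓝 0)) (hs : ∀ᶠ n in l, x - c * η n ∈ s) :
    (fun n => f x - f (x - c * η n) - c * f' * η n) =o[l] η := by
  have hlim : Tendsto (fun n => x - c * η n) l (𝓝[s] x) :=
    tendsto_nhdsWithin_iff.2 ⟨by simpa using (hη.const_mul c).const_sub x, hs⟩
  have hO : (fun n => x - c * η n - x) =O[l] η :=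
    (isBigO_const_mul_self (-c) η l).congr_left fun n => by ring
  exact (((hasDerivWithinAt_iff_isLittleO.1 hf).comp_tendsto hlim).trans_isBigO hO).neg_left
    |>.congr_left fun n => by simp only [Function.comp_apply, smul_eq_mul]; ring

theorem isLittleO_trapProb_sub {f : ℝ → ℝ} {m fq' q : ℝ} (hf1 : f 1 = 1) (hfix : f q = q)
    (hm : HasDerivWithinAt f m (Icc 0 1) 1) (hfq' : HasDerivWithinAt f fq' (Icc 0 1) q)
    (hq0 : 0 ≤ q) (hq1 : q < 1) {ι : Type*} {l : Filter ι} {η : ι → ℝ}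
    (hη0 : Tendsto η l (𝓝 0)) (hη : ∀ᶠ n in l, 0 ≤ η n) :
    (fun n => trapProb f q (η n) - q * (m - fq') / (1 - q) * η n) =o[l] η := by
  have hη01 : ∀ᶠ n in l, 0 ≤ q * η n ∧ q * η n ≤ q :=
    (hη.and (hη0.eventually (ge_mem_nhds one_pos))).mono fun n hn =>
      ⟨mul_nonneg hq0 hn.1, mul_le_of_le_one_right hq0 hn.2⟩
  have hexp1 := hm.sub_comp_sub_mul_isLittleO hη0 <| hη01.mono fun n hn =>
    ⟨by linarith, by linarith⟩
  have hexpq := hfq'.sub_comp_sub_mul_isLittleO hη0 <| hη01.mono fun n hn =>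
    ⟨by linarith, by linarith⟩
  have hq1' : 1 - q ≠ 0 := by linarith
  refine ((hexp1.sub hexpq).const_mul_left (1 - q)⁻¹).congr_left fun n => ?_
  rw [trapProb, hf1, hfix, show (1 - η n) * q + (1 - q) = 1 - q * η n by ring,
    show (1 - η n) * q = q - q * η n by ring]
  field_simp
  ring

theorem Asymptotics.IsLittleO.isEquivalent_const_mul {α 𝕜 : Type*} [NormedField 𝕜]
    {l : Filter α} {u η v : α → 𝕜} {c : 𝕜} (hc : c ≠ 0)
    (h : (fun n => u n - c * η n) =o[l] η) (hη : η ~[l] v) : u ~[l] fun n => c * v n :=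
  (h.trans_isBigO (isBigO_self_const_mul hc η l)).isEquivalent.trans
    ((IsEquivalent.refl (u := fun _ => c)).mul hη)

theorem trap_probability_asymptotics_general
    (p : ℕ → ℝ) (hp : ∀ k, 0 ≤ p k) (hsum : ∑' k, p k = 1)
    (hmeansummable : Summable (fun k : ℕ => (k : ℝ) * p k))
    (m : ℝ) (hm : m = ∑' k : ℕ, (k : ℝ) * p k) (hm1 : 1 < m)
    (q : ℝ) (hq0 : 0 < q) (hq1 : q < 1)
    (hfix : (∑' k : ℕ, p k * q ^ k) = q)
    (fq' : ℝ) (hfq' : fq' = ∑' k : ℕ, (k : ℝ) * p k * q ^ (k - 1))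
    (η : ℕ → ℝ) (hη : ∀ n, 0 < η n ∧ η n < 1)
    (h : ℕ → ℕ) (hh : Tendsto h atTop atTop)
    (α : ℝ)
    (hequiv : (fun n => η n) ~[atTop] (fun n => α * fq' ^ h n)) :
    (fun n => 1 - ((∑' k : ℕ, p k * ((1 - η n) * q + (1 - q)) ^ k)
        - (∑' k : ℕ, p k * ((1 - η n) * q) ^ k)) / (1 - q))
      ~[atTop] (fun n => (α * q * (m - fq') / (1 - q)) * fq' ^ h n) := by
  have hfq'_lt_one : fq' < 1 :=
    hfq' ▸ tsum_natCast_mul_mul_pow_pred_lt_one hp hsum hmeansummable (hm ▸ hm1) hq0.le hq1 hfix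
  have hfq'_nonneg : 0 ≤ fq' :=
    hfq' ▸ tsum_nonneg fun k => mul_nonneg (mul_nonneg k.cast_nonneg (hp k)) (pow_nonneg hq0.le _)
  have hη0 : Tendsto η atTop (𝓝 0) := hequiv.symm.tendsto_nhds <| by
    have hpow := tendsto_pow_atTop_nhds_zero_of_lt_one hfq'_nonneg hfq'_lt_one
    simpa using (hpow.comp hh).const_mul α
  have hderiv : ∀ x ∈ Icc (0 : ℝ) 1, HasDerivWithinAt (genFun p)
      (∑' k : ℕ, (k : ℝ) * p k * x ^ (k - 1)) (Icc 0 1) x := fun x hx =>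
    (hasDerivWithinAt_genFun hmeansummable (Icc_subset_Icc (by norm_num) le_rfl hx)).mono
      (Icc_subset_Icc (by norm_num) le_rfl)
  have hexp := isLittleO_trapProb_sub (by simp [genFun, hsum]) hfix
    (by simpa [← hm] using hderiv 1 ⟨zero_le_one, le_rfl⟩) (hfq' ▸ hderiv q ⟨hq0.le, hq1.le⟩)
    hq0.le hq1 hη0 (Eventually.of_forall fun n => (hη n).1.le)
  have hC : q * (m - fq') / (1 - q) ≠ 0 :=
    div_ne_zero (mul_ne_zero hq0.ne' (by linarith)) (by linarith)
  exact (hexp.isEquivalent_const_mul hC hequiv).congr_right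
    (Eventually.of_forall fun n => by ring)

/-- Let `f(s) = ∑ p_k s^k` be a supercritical offspring generating
function with mean `m = f'(1) ∈ (1,∞)` and extinction probability `q ∈ (0,1)`
(`f(q) = q`). If `η_n ∈ (0,1)` satisfies `η_n ∼ α f'(q)^{h_n}` with `h_n → ∞`, then
`1 - (f((1-η_n)q + 1 - q) - f((1-η_n)q))/(1-q) ∼ C_a f'(q)^{h_n}` where
`C_a = α q (m - f'(q))/(1-q)`. -/
theorem trap_probability_asymptotics
    (p : ℕ → ℝ) (hp : ∀ k, 0 ≤ p k) (hsum : ∑' k, p k = 1)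
    (hmeansummable : Summable (fun k : ℕ => (k : ℝ) * p k))
    (m : ℝ) (hm : m = ∑' k : ℕ, (k : ℝ) * p k) (hm1 : 1 < m)
    (q : ℝ) (hq0 : 0 < q) (hq1 : q < 1)
    (hfix : (∑' k : ℕ, p k * q ^ k) = q)
    (fq' : ℝ) (hfq' : fq' = ∑' k : ℕ, (k : ℝ) * p k * q ^ (k - 1))
    (η : ℕ → ℝ) (hη : ∀ n, 0 < η n ∧ η n < 1)
    (h : ℕ → ℕ) (hh : Tendsto h atTop atTop)
    (α : ℝ) (hα : 0 < α)
    (hequiv : (fun n => η n) ~[atTop] (fun n => α * fq' ^ h n)) :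
    (fun n => 1 - ((∑' k : ℕ, p k * ((1 - η n) * q + (1 - q)) ^ k)
        - (∑' k : ℕ, p k * ((1 - η n) * q) ^ k)) / (1 - q))
      ~[atTop] (fun n => (α * q * (m - fq') / (1 - q)) * fq' ^ h n) :=
  trap_probability_asymptotics_general p hp hsum hmeansummable m hm hm1 q hq0 hq1 hfix fq' hfq' η hη
    h hh α hequiv
end
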